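/- Let α, β, N be real numbers with α ∉ {−1,−2,−3,…}, and write λ(x) = x(x+α+β+1) and R_n = R_n^{α,β,N}. Then for every integer n ≥ 0 and every real x with (2x+α+β)(2x+α+β+1)(2x+α+β+2) ≠ 0: ((x+α+β+1)(N−x)/((2x+α+β+1)(2x+α+β+2))) · (R_n(λ(x+1)) − R_n(λ(x))) + (x(x+α+β+N+1)/((2x+α+β)(2x+α+β+1))) · (R_n(λ(x)) − R_n(λ(x−1))) = Σ_{j=1}^n (−1)^{j+1} ((N−n+1)_j/(α+n−j+1)_j) R_{n−j}(λ(x)). (This says that the sequence ε_n = (N−n+1)/(α+n) defines a D-operator D_3 for the dual Hahn polynomials, the displayed difference operator.) -/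

import Mathlib

open Polynomial Finset

noncomputable section

/-- Pochhammer symbol `(a)_k = a(a+1)⋯(a+k−1)`. -/
def poch (a : ℝ) (k : ℕ) : ℝ := ∏ i ∈ Finset.range k, (a + i)

/-- The quadratic lattice `λ^{α,β}(x) = x(x+α+β+1)`. -/
def lam (α β x : ℝ) : ℝ := x * (x + α + β + 1)

/-- The dual Hahn polynomial `R_n^{α,β,N}`. -/
def dualHahn (α β N : ℝ) (n : ℕ) : Polynomial ℝ :=
  Polynomial.C ((n.factorial : ℝ))⁻¹ *
    ∑ j ∈ Finset.range (n + 1),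
      Polynomial.C ((-1 : ℝ) ^ j * poch (-(n : ℝ)) j * poch (-N + j) (n - j)
          / (poch (α + 1) j * (j.factorial : ℝ))) *
        ∏ i ∈ Finset.range j, (Polynomial.X - Polynomial.C ((i : ℝ) * (α + β + 1 + i)))

/-- Dual Hahn polynomial with integer index; `R_k = 0` for `k < 0`. -/
def dualHahnZ (α β N : ℝ) (k : ℤ) : Polynomial ℝ :=
  if 0 ≤ k then dualHahn α β N k.toNat else 0

/-- The Hahn polynomial `h_n^{α,β,N}` evaluated at `x`. -/
def hahn (α β N : ℝ) (n : ℕ) (x : ℝ) : ℝ :=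
  ∑ j ∈ Finset.range (n + 1),
    poch (-(n : ℝ)) j * poch ((n : ℝ) + α + β + 1) j * poch (-N + j) (n - j) *
      poch (α + j + 1) (n - j) * poch (-x) j / (j.factorial : ℝ)

/-- The dual Hahn weight `w_{*;α,β,N}(x)`. -/
def dualHahnWeight (α β : ℝ) (N : ℕ) (x : ℕ) : ℝ :=
  (2 * (x : ℝ) + α + β + 1) * poch (α + 1) x * poch (-(N : ℝ)) x * (N.factorial : ℝ) /
    ((-1 : ℝ) ^ x * poch ((x : ℝ) + α + β + 1) (N + 1) * poch (β + 1) x * (x.factorial : ℝ))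

/-!
In the variable `x` of the lattice `λ(x) = x (x + α + β + 1)`, the Newton basis of the dual Hahn
polynomials becomes `latticeProd (α + β) j x = ∏_{i<j} (x - i) (x + α + β + 1 + i)`, and the
difference operator `D` lowers it: `D (latticeProd (j + 1)) = (j + 1) (N - j) latticeProd j`.
Together with a contiguous relation for the coefficients in `j`, this shows that `D` multiplies
the `j`-th coefficient of `R_n` by `(j - n) / (α + j + 1)`; a contiguous relation in `n` then gives
`D R_{n+1} = ε_{n+1} (R_n - D R_n)`. Unfolding this recursion from `D R_0 = 0` produces the
alternating sum of the products `ε_n ⋯ ε_{n-j+1}`.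
-/

lemma poch_succ (a : ℝ) (k : ℕ) : poch a (k + 1) = poch a k * (a + k) :=
  prod_range_succ _ _

lemma poch_succ' (a : ℝ) (k : ℕ) : poch a (k + 1) = a * poch (a + 1) k := by
  rw [poch, prod_range_succ', poch, mul_comm]
  simp only [Nat.cast_zero, add_zero, Nat.cast_succ, add_assoc, add_comm (1 : ℝ)]

lemma poch_ne_zero {a : ℝ} (h : ∀ i : ℕ, a + i ≠ 0) (k : ℕ) : poch a k ≠ 0 :=
  prod_ne_zero_iff.mpr fun i _ ↦ h i

def latticeProd (s : ℝ) (j : ℕ) (x : ℝ) : ℝ :=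
  ∏ i ∈ range j, (x - i) * (x + s + 1 + i)

section latticeProd

variable (s : ℝ) (j : ℕ) (x : ℝ)

@[simp]
lemma latticeProd_zero : latticeProd s 0 x = 1 :=
  prod_range_zero _

lemma latticeProd_succ :
    latticeProd s (j + 1) x = latticeProd s j x * ((x - j) * (x + s + 1 + j)) :=
  prod_range_succ _ _

lemma latticeProd_succ_add_one :
    latticeProd s (j + 1) (x + 1) = (x + 1) * (x + s + 2 + j) * latticeProd (s + 1) j x := by
  induction j with
  | zero => simp only [latticeProd_succ, latticeProd_zero]; ring
  | succ j ih =>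
    rw [latticeProd_succ, ih, latticeProd_succ (s + 1)]
    push_cast
    ring

lemma latticeProd_succ_eq :
    latticeProd s (j + 1) x = (x - j) * (x + s + 1) * latticeProd (s + 1) j x := by
  induction j with
  | zero => simp [latticeProd_succ]
  | succ j ih =>
    rw [latticeProd_succ, ih, latticeProd_succ (s + 1)]
    push_cast
    ring

lemma latticeProd_succ_add_one_sub :
    latticeProd s (j + 1) (x + 1) - latticeProd s (j + 1) x =
      (j + 1) * (2 * x + s + 2) * latticeProd (s + 1) j x := by
  linear_combination latticeProd_succ_add_one s j x - latticeProd_succ_eq s j x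

lemma add_mul_latticeProd_add_one :
    (x + s + 1) * latticeProd (s + 1) j x = (x + s + 1 + j) * latticeProd s j x := by
  induction j with
  | zero => simp
  | succ j ih =>
    rw [latticeProd_succ (s + 1), latticeProd_succ s]
    push_cast
    linear_combination (x - j) * (x + s + 2 + j) * ih

lemma mul_latticeProd_add_one_sub_one :
    x * latticeProd (s + 1) j (x - 1) = (x - j) * latticeProd s j x := by
  induction j with
  | zero => simp
  | succ j ih =>
    rw [latticeProd_succ (s + 1), latticeProd_succ s]
    push_cast
    linear_combination (x - 1 - j) * (x + s + 1 + j) * ih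

end latticeProd

def dualHahnDiffOp (α β N : ℝ) (f : ℝ → ℝ) (x : ℝ) : ℝ :=
  (x + α + β + 1) * (N - x) / ((2 * x + α + β + 1) * (2 * x + α + β + 2)) * (f (x + 1) - f x) +
    x * (x + α + β + N + 1) / ((2 * x + α + β) * (2 * x + α + β + 1)) * (f x - f (x - 1))

lemma dualHahnDiffOp_sum (α β N : ℝ) (s : Finset ℕ) (c : ℕ → ℝ) (f : ℕ → ℝ → ℝ) (x : ℝ) :
    dualHahnDiffOp α β N (fun y ↦ ∑ j ∈ s, c j * f j y) x =
      ∑ j ∈ s, c j * dualHahnDiffOp α β N (f j) x := by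
  simp only [dualHahnDiffOp, mul_sum, ← sum_sub_distrib, ← sum_add_distrib]
  exact sum_congr rfl fun j _ ↦ by ring

lemma dualHahnDiffOp_latticeProd_zero (α β N x : ℝ) :
    dualHahnDiffOp α β N (latticeProd (α + β) 0) x = 0 := by
  simp [dualHahnDiffOp]

lemma dualHahnDiffOp_latticeProd_succ (α β N : ℝ) (j : ℕ) {x : ℝ}
    (hx : (2 * x + α + β) * (2 * x + α + β + 1) * (2 * x + α + β + 2) ≠ 0) :
    dualHahnDiffOp α β N (latticeProd (α + β) (j + 1)) x =
      (j + 1) * (N - j) * latticeProd (α + β) j x := by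
  obtain ⟨⟨h₀, h₁⟩, h₂⟩ := mul_ne_zero_iff.mp hx |>.imp_left mul_ne_zero_iff.mp
  rw [mul_comm 2 x] at h₀ h₁ h₂
  have forward := latticeProd_succ_add_one_sub (α + β) j x
  have backward := latticeProd_succ_add_one_sub (α + β) j (x - 1)
  rw [sub_add_cancel] at backward
  rw [dualHahnDiffOp, forward, backward, show 2 * x + (α + β) + 2 = 2 * x + α + β + 2 by ring,
    show 2 * (x - 1) + (α + β) + 2 = 2 * x + α + β by ring]
  field_simp
  linear_combination (N - x) * add_mul_latticeProd_add_one (α + β) j x +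
    (x + α + β + N + 1) * mul_latticeProd_add_one_sub_one (α + β) j x

def dualHahnCoeff (α N : ℝ) (n j : ℕ) : ℝ :=
  (-1) ^ j * poch (-(n : ℝ)) j * poch (-N + j) (n - j) /
    (poch (α + 1) j * j.factorial * n.factorial)

lemma eval_dualHahn_lam (α β N x : ℝ) (n : ℕ) :
    (dualHahn α β N n).eval (lam α β x) =
      ∑ j ∈ range (n + 1), dualHahnCoeff α N n j * latticeProd (α + β) j x := by
  rw [dualHahn, eval_mul, eval_C, eval_finsetSum, mul_sum]
  refine sum_congr rfl fun j _ ↦ ?_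
  have hprod : ((∏ i ∈ range j, (X - C ((i : ℝ) * (α + β + 1 + i)))).eval (lam α β x)) =
      latticeProd (α + β) j x := by
    rw [eval_prod, latticeProd]
    exact prod_congr rfl fun i _ ↦ by simp only [eval_sub, eval_X, eval_C, lam]; ring
  rw [eval_mul, eval_C, hprod, dualHahnCoeff]
  ring

lemma dualHahnCoeff_succ_right {α : ℝ} (hα : ∀ k : ℕ, α ≠ -1 - k) (N : ℝ) {n j : ℕ}
    (hj : j < n) :
    dualHahnCoeff α N n (j + 1) * ((j + 1) * (N - j)) =
      (j - n) / (α + j + 1) * dualHahnCoeff α N n j := by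
  obtain ⟨k, rfl⟩ : ∃ k, n = j + 1 + k := ⟨n - j - 1, by omega⟩
  have hpoch : poch (α + 1) j ≠ 0 := poch_ne_zero (fun i h ↦ hα i (by linear_combination h)) j
  have hαj : α + j + 1 ≠ 0 := fun h ↦ hα j (by linear_combination h)
  have hαj' : α + 1 + j ≠ 0 := fun h ↦ hα j (by linear_combination h)
  rw [dualHahnCoeff, dualHahnCoeff, show j + 1 + k - (j + 1) = k by omega,
    show j + 1 + k - j = k + 1 by omega, poch_succ, poch_succ (α + 1), poch_succ' (-N + j),
    Nat.factorial_succ, show -N + ((j + 1 : ℕ) : ℝ) = -N + j + 1 by push_cast; ring]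
  push_cast
  field_simp
  ring

lemma dualHahnCoeff_succ_left (α N : ℝ) {n j : ℕ} (hj : j ≤ n) :
    (j - (n + 1)) * dualHahnCoeff α N (n + 1) j = (N - n) * dualHahnCoeff α N n j := by
  obtain ⟨k, rfl⟩ : ∃ k, n = j + k := ⟨n - j, by omega⟩
  have hpoch : poch (-(j + k + 1 : ℝ)) j * (j - (j + k + 1)) =
      -(j + k + 1) * poch (-(j + k : ℝ)) j := by
    have h := (poch_succ (-(j + k + 1 : ℝ)) j).symm.trans (poch_succ' _ j)
    rw [show -((j : ℝ) + k + 1) + 1 = -(j + k) by ring] at h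
    linear_combination h
  rw [dualHahnCoeff, dualHahnCoeff, show j + k + 1 - j = k + 1 by omega,
    show j + k - j = k by omega, poch_succ (-N + j), Nat.factorial_succ]
  push_cast
  field_simp
  linear_combination poch (-N + j) k * (-N + j + k) / poch (α + 1) j * hpoch

lemma dualHahnDiffOp_dualHahn {α β : ℝ} (hα : ∀ k : ℕ, α ≠ -1 - k) (N : ℝ) (n : ℕ) {x : ℝ}
    (hx : (2 * x + α + β) * (2 * x + α + β + 1) * (2 * x + α + β + 2) ≠ 0) :
    dualHahnDiffOp α β N (fun y ↦ (dualHahn α β N n).eval (lam α β y)) x =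
      ∑ j ∈ range (n + 1),
        (j - n) / (α + j + 1) * dualHahnCoeff α N n j * latticeProd (α + β) j x := by
  simp only [eval_dualHahn_lam]
  rw [dualHahnDiffOp_sum, sum_range_succ', sum_range_succ, dualHahnDiffOp_latticeProd_zero]
  simp only [dualHahnDiffOp_latticeProd_succ _ _ _ _ hx, sub_self, zero_div, zero_mul, mul_zero,
    add_zero]
  refine sum_congr rfl fun j hj ↦ ?_
  rw [← dualHahnCoeff_succ_right hα N (mem_range.mp hj)]
  ring

lemma dualHahnDiffOp_dualHahn_succ {α β : ℝ} (hα : ∀ k : ℕ, α ≠ -1 - k) (N : ℝ) (n : ℕ) {x : ℝ}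
    (hx : (2 * x + α + β) * (2 * x + α + β + 1) * (2 * x + α + β + 2) ≠ 0) :
    dualHahnDiffOp α β N (fun y ↦ (dualHahn α β N (n + 1)).eval (lam α β y)) x =
      (N - n) / (α + n + 1) * ((dualHahn α β N n).eval (lam α β x) -
        dualHahnDiffOp α β N (fun y ↦ (dualHahn α β N n).eval (lam α β y)) x) := by
  rw [dualHahnDiffOp_dualHahn hα N (n + 1) hx, dualHahnDiffOp_dualHahn hα N n hx,
    eval_dualHahn_lam, sum_range_succ, ← sum_sub_distrib, mul_sum]
  simp only [sub_self, zero_div, zero_mul, add_zero]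
  refine sum_congr rfl fun j hj ↦ ?_
  have hαj : α + j + 1 ≠ 0 := fun h ↦ hα j (by linear_combination h)
  have hαn : α + n + 1 ≠ 0 := fun h ↦ hα n (by linear_combination h)
  have := dualHahnCoeff_succ_left α N (Nat.lt_succ_iff.mp (mem_range.mp hj))
  push_cast
  field_simp
  linear_combination (α + n + 1) * latticeProd (α + β) j x * this

theorem eq_sum_Icc_of_eq_mul_sub {R : Type*} [CommRing R] {d p ε : ℕ → R} (h₀ : d 0 = 0)
    (hsucc : ∀ n, d (n + 1) = ε (n + 1) * (p n - d n)) (n : ℕ) :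
    d n = ∑ j ∈ Icc 1 n, (-1) ^ (j + 1) * (∏ i ∈ range j, ε (n - i)) * p (n - j) := by
  induction n with
  | zero => simp [h₀]
  | succ n ih =>
    rw [← insert_Icc_add_one_left_eq_Icc (by omega), sum_insert (by simp), ← map_add_right_Icc,
      sum_map, hsucc, ih, mul_sub, mul_sum, sub_eq_add_neg, ← sum_neg_distrib]
    simp only [addRightEmbedding_apply, prod_range_succ', Nat.add_sub_add_right, Nat.sub_zero,
      add_tsub_cancel_right, prod_range_zero]
    congr 1
    · ring
    · exact sum_congr rfl fun j _ ↦ by ring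

lemma prod_range_div_eq_poch (α N : ℝ) {n j : ℕ} (hj : j ≤ n) :
    ∏ i ∈ range j, (N - ((n - i : ℕ) : ℝ) + 1) / (α + ((n - i : ℕ) : ℝ)) =
      poch (N - n + 1) j / poch (α + n - j + 1) j := by
  rw [prod_div_distrib, poch, poch, ← prod_range_reflect (fun i : ℕ ↦ α + n - j + 1 + i) j]
  congr 1 <;> refine prod_congr rfl fun i hi ↦ ?_
  · have := mem_range.mp hi
    rw [Nat.cast_sub (by omega)]; ring
  · have := mem_range.mp hi
    rw [Nat.sub_sub, Nat.cast_sub (by omega), Nat.cast_sub (by omega)]; push_cast; ring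

/-- The sequence `ε_n = (N−n+1)/(α+n)` defines a `𝒟`-operator for the dual Hahn
polynomials: the displayed first-order difference operator acts as the corresponding
lowering operator. -/
theorem dualHahn_Doperator_three (α β N : ℝ) (hα : ∀ k : ℕ, α ≠ -1 - k)
    (n : ℕ) (x : ℝ)
    (hx : (2 * x + α + β) * (2 * x + α + β + 1) * (2 * x + α + β + 2) ≠ 0) :
    ((x + α + β + 1) * (N - x) / ((2 * x + α + β + 1) * (2 * x + α + β + 2))) *
        ((dualHahn α β N n).eval (lam α β (x + 1)) - (dualHahn α β N n).eval (lam α β x)) +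
      (x * (x + α + β + N + 1) / ((2 * x + α + β) * (2 * x + α + β + 1))) *
        ((dualHahn α β N n).eval (lam α β x) - (dualHahn α β N n).eval (lam α β (x - 1))) =
    ∑ j ∈ Finset.Icc 1 n, (-1 : ℝ) ^ (j + 1) *
      (poch (N - n + 1) j / poch (α + n - j + 1) j) *
        (dualHahn α β N (n - j)).eval (lam α β x) := by
  have hsucc : ∀ m : ℕ,
      dualHahnDiffOp α β N (fun y ↦ (dualHahn α β N (m + 1)).eval (lam α β y)) x =
        (N - ((m + 1 : ℕ) : ℝ) + 1) / (α + ((m + 1 : ℕ) : ℝ)) *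
          ((dualHahn α β N m).eval (lam α β x) -
            dualHahnDiffOp α β N (fun y ↦ (dualHahn α β N m).eval (lam α β y)) x) := fun m ↦ by
    rw [dualHahnDiffOp_dualHahn_succ hα N m hx]
    congr 1
    push_cast
    ring
  have h₀ : dualHahnDiffOp α β N (fun y ↦ (dualHahn α β N 0).eval (lam α β y)) x = 0 := by
    simp [dualHahnDiffOp_dualHahn hα N 0 hx]
  refine (eq_sum_Icc_of_eq_mul_sub
    (d := fun m ↦ dualHahnDiffOp α β N (fun y ↦ (dualHahn α β N m).eval (lam α β y)) x)
    (p := fun m ↦ (dualHahn α β N m).eval (lam α β x))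
    (ε := fun m : ℕ ↦ (N - m + 1) / (α + m)) h₀ hsucc n).trans (sum_congr rfl fun j hj ↦ ?_)
  rw [prod_range_div_eq_poch α N (mem_Icc.mp hj).2]

end
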